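/- Let S be a string of length 2m over the alphabet {(, ), [, ]} in which the parentheses form a balanced sequence of length 2(n-1) and the brackets form a balanced sequence of length 2(m-n+1). If the substring '[]' never occurs in S (reading S circularly), then the first-order empirical entropy of S satisfies 2m·H₁(S) ≤ m·log₂(12) + n·log₂(4/3). -/

import Mathlib

/-- BalancedParens sequences of parentheses (`false` = '(' and `true` = ')'). -/
inductive BalancedParens : List Bool → Prop
  | nil : BalancedParens []
  | wrap {s t : List Bool} : BalancedParens s → BalancedParens t →
      BalancedParens (false :: (s ++ true :: t))

/-- the four-symbol alphabet `{ (, ), [, ] }`. -/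
inductive Sym4 where
  | op | cp | ob | cb
deriving DecidableEq

instance : Fintype Sym4 :=
  ⟨{.op, .cp, .ob, .cb}, by intro x; cases x <;> simp⟩

/-- number of (circular) occurrences of symbol `a` immediately after symbol `c`. -/
def cnt (S : List Sym4) (c a : Sym4) : ℕ := (S.zip (S.rotate 1)).count (c, a)

/-- `2m · H₁(S)`: total first-order empirical-entropy cost of `S` in bits
(terms with `cnt S c a = 0` vanish since `Real.logb 2 0 = 0`). -/
noncomputable def foCost (S : List Sym4) : ℝ :=
  ∑ c : Sym4, ∑ a : Sym4,
    (cnt S c a : ℝ) * Real.logb 2 ((S.count c : ℝ) / (cnt S c a : ℝ))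

/-- map keeping only the parentheses of `S` (as booleans, `false` = open). -/
def parens (S : List Sym4) : List Bool :=
  S.filterMap fun c => match c with
    | .op => some false | .cp => some true | _ => none

/-- map keeping only the brackets of `S` (as booleans, `false` = open). -/
def bracks (S : List Sym4) : List Bool :=
  S.filterMap fun c => match c with
    | .ob => some false | .cb => some true | _ => none

/-!
For each symbol `c`, the row `∑ₐ cnt S c a · log₂ (count c / cnt S c a)` is `count c` times the
entropy of the empirical distribution of successors of `c`, hence at most `count c · log₂ k` when
only `k` successors occur (concavity of `negMulLog`). Every symbol has at most 4 successors and
`[` at most 3, since `[]` is forbidden; so `2m·H₁(S) ≤ 4(n-1) + 2(m-n+1) + (m-n+1)·log₂ 3`,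
which falls short of the claimed bound by `2 - log₂ 3 > 0`.
-/

open Finset Real

theorem Real.sum_negMulLog_le_log_card {ι : Type*} (T : Finset ι) (p : ι → ℝ)
    (hp : ∀ a ∈ T, 0 ≤ p a) (hsum : ∑ a ∈ T, p a = 1) :
    ∑ a ∈ T, negMulLog (p a) ≤ log #T := by
  have hT : (0 : ℝ) < #T := by
    have : T.Nonempty := nonempty_of_sum_ne_zero (by rw [hsum]; exact one_ne_zero)
    exact_mod_cast this.card_pos
  have hw : ∑ _a ∈ T, (#T : ℝ)⁻¹ = 1 := by simp [hT.ne']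
  have jensen := concaveOn_negMulLog.le_map_sum (t := T) (w := fun _ => (#T : ℝ)⁻¹) (p := p)
    (fun _ _ => by positivity) hw (fun a ha => Set.mem_Ici.mpr (hp a ha))
  have uniform : negMulLog (#T : ℝ)⁻¹ = (#T : ℝ)⁻¹ * log #T := by simp [negMulLog, log_inv]
  simp only [smul_eq_mul, ← mul_sum, hsum, mul_one, uniform] at jensen
  exact le_of_mul_le_mul_left jensen (inv_pos.mpr hT)

theorem Real.sum_mul_logb_div_le_mul_logb_card {ι : Type*} [Fintype ι] {b : ℝ} (hb : 1 ≤ b)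
    (k : ι → ℝ) (hk : ∀ a, 0 ≤ k a) (T : Finset ι) (hT : ∀ a ∉ T, k a = 0) :
    ∑ a, k a * logb b ((∑ a', k a') / k a) ≤ (∑ a, k a) * logb b #T := by
  set N := ∑ a, k a
  rcases (show 0 ≤ N from sum_nonneg fun a _ => hk a).eq_or_lt with hN | hN
  · have : ∀ a, k a = 0 := fun a =>
      (sum_eq_zero_iff_of_nonneg fun a _ => hk a).mp hN.symm a (mem_univ a)
    simp [← hN, this]
  have hsub : ∀ f : ι → ℝ, (∀ a ∉ T, f a = 0) → ∑ a ∈ T, f a = ∑ a, f a := fun f hf =>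
    sum_subset (subset_univ T) fun a _ ha => hf a ha
  have term : ∀ a, k a * log (N / k a) = N * negMulLog (k a / N) := by
    intro a
    rw [negMulLog, ← inv_div (k a) N, log_inv]
    field_simp
  have entropy := sum_negMulLog_le_log_card T (fun a => k a / N)
    (fun a _ => div_nonneg (hk a) hN.le) (by rw [← sum_div, hsub k hT, div_self hN.ne'])
  have hlog : ∑ a, k a * log (N / k a) ≤ N * log #T := by
    rw [← hsub _ fun a ha => by simp [hT a ha]]
    simp only [term, ← mul_sum]
    exact mul_le_mul_of_nonneg_left entropy hN.le
  simp only [logb, mul_div_assoc', ← sum_div]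
  exact div_le_div_of_nonneg_right hlog (log_nonneg hb)

theorem List.sum_count_mk_eq_count_map_fst {α β : Type*} [DecidableEq α] [DecidableEq β]
    [Fintype β] (L : List (α × β)) (a : α) :
    ∑ b, L.count (a, b) = (L.map Prod.fst).count a := by
  induction L with
  | nil => simp
  | cons x L ih =>
    rcases x with ⟨x, y⟩
    by_cases h : x = a <;> simp [List.count_cons, sum_add_distrib, ih, h]

theorem sum_cnt_eq_count (S : List Sym4) (c : Sym4) : ∑ a, cnt S c a = S.count c := by
  simp only [cnt]
  rw [List.sum_count_mk_eq_count_map_fst, List.map_fst_zip (by simp)]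

theorem foCost_le_sum_count_mul_logb_card (S : List Sym4) (T : Sym4 → Finset Sym4)
    (hT : ∀ c a, a ∉ T c → cnt S c a = 0) :
    foCost S ≤ ∑ c, (S.count c : ℝ) * logb 2 #(T c) := by
  refine sum_le_sum fun c _ => ?_
  have row := sum_mul_logb_div_le_mul_logb_card one_le_two (fun a => (cnt S c a : ℝ))
    (fun a => Nat.cast_nonneg _) (T c) (fun a ha => by simp [hT c a ha])
  simpa only [← Nat.cast_sum, sum_cnt_eq_count] using row

theorem Sym4.sum_univ {M : Type*} [AddCommMonoid M] (f : Sym4 → M) :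
    ∑ c, f c = f .op + f .cp + f .ob + f .cb := by
  rw [show (univ : Finset Sym4) = {.op, .cp, .ob, .cb} from rfl]
  simp [add_assoc]

theorem first_order_entropy_bound_general (m n : ℕ) (S : List Sym4)
    (hn : 1 ≤ n) (hnm : n ≤ m)
    (hop : S.count .op = n - 1) (hcp : S.count .cp = n - 1)
    (hob : S.count .ob = m - n + 1) (hcb : S.count .cb = m - n + 1)
    (hforbid : cnt S .ob .cb = 0) :
    foCost S ≤ (m : ℝ) * Real.logb 2 12 + (n : ℝ) * Real.logb 2 (4 / 3) := by
  have successors : ∀ c a, a ∉ (if c = .ob then {.op, .cp, .ob} else univ) → cnt S c a = 0 := by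
    intro c a ha
    cases c <;> cases a <;> simp_all
  have hcost := foCost_le_sum_count_mul_logb_card S _ successors
  have card4 : #(univ : Finset Sym4) = 4 := rfl
  have card3 : #({.op, .cp, .ob} : Finset Sym4) = 3 := rfl
  simp only [Sym4.sum_univ, reduceCtorEq, ↓reduceIte, card4, card3, hop, hcp, hob, hcb] at hcost
  push_cast [Nat.cast_sub hn, Nat.cast_sub hnm] at hcost
  have log4 : logb 2 4 = 2 := by
    rw [show (4 : ℝ) = 2 ^ 2 by norm_num, logb_pow, logb_self_eq_one one_lt_two]
    norm_num
  have log12 : logb 2 12 = 2 + logb 2 3 := by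
    rw [show (12 : ℝ) = 4 * 3 by norm_num, logb_mul four_ne_zero three_ne_zero, log4]
  have log43 : logb 2 (4 / 3) = 2 - logb 2 3 := by
    rw [logb_div four_ne_zero three_ne_zero, log4]
  have log3 : logb 2 3 ≤ 2 :=
    (logb_le_logb_of_le one_lt_two three_pos (by norm_num)).trans_eq log4
  rw [log4] at hcost
  rw [log12, log43]
  linarith

/-- If `S` has balanced parentheses of length `2(n-1)`, balanced brackets of
length `2(m-n+1)`, and the substring `[]` never occurs (circularly), then
`2m·H₁(S) ≤ m·log2 12 + n·log2 (4/3)`. -/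
theorem first_order_entropy_bound (m n : ℕ) (S : List Sym4)
    (hn : 1 ≤ n) (hnm : n ≤ m) (hlen : S.length = 2 * m)
    (hbalp : BalancedParens (parens S)) (hbalb : BalancedParens (bracks S))
    (hop : S.count .op = n - 1) (hcp : S.count .cp = n - 1)
    (hob : S.count .ob = m - n + 1) (hcb : S.count .cb = m - n + 1)
    (hforbid : cnt S .ob .cb = 0) :
    foCost S ≤ (m : ℝ) * Real.logb 2 12 + (n : ℝ) * Real.logb 2 (4 / 3) :=
  first_order_entropy_bound_general m n S hn hnm hop hcp hob hcb hforbid
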